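/- In a parity game over a game graph G = (V₁, V₂, E, c), the winning regions of Player I and Player II form a partition of V₁ ∪ V₂ (every vertex belongs to the winning region of exactly one of the two players), and each player has a uniform memoryless winning strategy on her winning region, i.e., a single memoryless strategy that is winning from every vertex of her winning region. -/

import Mathlib

/-- The maximal color occurring infinitely often in the sequence `s` exists and is even. -/
def MaxInfEven (s : ℕ → ℕ) : Prop :=
  ∃ m, Even m ∧ {k | s k = m}.Infinite ∧ ∀ m', {k | s k = m'}.Infinite → m' ≤ m

/-- The two players of an infinite game. -/
inductive Player
  | one
  | two

/-- The opponent of a player. -/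
def Player.other : Player → Player
  | .one => .two
  | .two => .one

/-- A parity game graph: every element of `V` is a vertex, owned by a player,
with edge relation `E` and coloring `color`. -/
structure GameGraph (V : Type) where
  owner : V → Player
  E : V → V → Prop
  color : V → ℕ

/-- The play `π` is won by player `p`: for Player II this means the maximal color
occurring infinitely often is even, for Player I that it is not. -/
def GameGraph.WonBy {V : Type} (G : GameGraph V) (p : Player) (π : ℕ → V) : Prop :=
  match p with
  | .two => MaxInfEven (fun n => G.color (π n))
  | .one => ¬ MaxInfEven (fun n => G.color (π n))

/-- The finite prefix `π 0, …, π n` of an infinite sequence, as a list. -/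
def hist {V : Type} (π : ℕ → V) (n : ℕ) : List V :=
  List.ofFn (fun i : Fin (n + 1) => π i.val)

/-- Finite play prefixes from `u₀` in which player `p` always moves according to
the strategy `σ` (given as a function from nonempty play prefixes to vertices). -/
inductive ConsHist {V : Type} (G : GameGraph V) (p : Player) (σ : List V → V) (u₀ : V) :
    List V → Prop
  | init : ConsHist G p σ u₀ [u₀]
  | ownStep (l : List V) (v : V) : ConsHist G p σ u₀ l → l.getLast? = some v →
      G.owner v = p → ConsHist G p σ u₀ (l ++ [σ l])
  | oppStep (l : List V) (v w : V) : ConsHist G p σ u₀ l → l.getLast? = some v →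
      G.owner v ≠ p → G.E v w → ConsHist G p σ u₀ (l ++ [w])

/-- `σ` is a (legal) strategy for player `p` from `u₀`: at every play prefix from `u₀`
consistent with `σ` and ending in a vertex of `p`, the prescribed move is along an edge. -/
def IsStrategyFrom {V : Type} (G : GameGraph V) (p : Player) (σ : List V → V) (u₀ : V) : Prop :=
  ∀ l v, ConsHist G p σ u₀ l → l.getLast? = some v → G.owner v = p → G.E v (σ l)

/-- `π` is an infinite play from `u₀`. -/
def IsPlayFrom {V : Type} (G : GameGraph V) (u₀ : V) (π : ℕ → V) : Prop :=
  π 0 = u₀ ∧ ∀ n, G.E (π n) (π (n + 1))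

/-- In the play `π`, player `p` always moves according to the strategy `σ`. -/
def ConsistentPlay {V : Type} (G : GameGraph V) (p : Player) (σ : List V → V) (π : ℕ → V) :
    Prop :=
  ∀ n, G.owner (π n) = p → π (n + 1) = σ (hist π n)

/-- `σ` is a winning strategy for player `p` from `u₀`. -/
def WinningStrategyFrom {V : Type} (G : GameGraph V) (p : Player) (σ : List V → V) (u₀ : V) :
    Prop :=
  IsStrategyFrom G p σ u₀ ∧
    ∀ π, IsPlayFrom G u₀ π → ConsistentPlay G p σ π → G.WonBy p π

/-- The strategy induced by a memoryless strategy `f` (depending only on the last vertex). -/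
def liftMemoryless {V : Type} (f : V → V) (u₀ : V) : List V → V :=
  fun l => f (l.getLast?.getD u₀)

/-- The memoryless strategy `f` is a winning strategy for player `p` from `u₀`. -/
def MemorylessWinningFrom {V : Type} (G : GameGraph V) (p : Player) (f : V → V) (u₀ : V) :
    Prop :=
  WinningStrategyFrom G p (liftMemoryless f u₀) u₀

/-- The winning region of player `p`: the vertices from which `p` has a winning strategy. -/
def WinningRegion {V : Type} (G : GameGraph V) (p : Player) : Set V :=
  {u | ∃ σ, WinningStrategyFrom G p σ u}

section ParityProof
open Classical

theorem setInfinite_shift (s : ℕ → ℕ) (m n₀ : ℕ) :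
    {k | s (k + n₀) = m}.Infinite ↔ {k | s k = m}.Infinite := by
  rw [← Nat.frequently_atTop_iff_infinite, ← Nat.frequently_atTop_iff_infinite,
    Filter.frequently_atTop, Filter.frequently_atTop]
  constructor
  · intro h a
    obtain ⟨b, hb, hs⟩ := h a
    exact ⟨b + n₀, le_trans hb (Nat.le_add_right _ _), hs⟩
  · intro h a
    obtain ⟨b, hb, hs⟩ := h (a + n₀)
    refine ⟨b - n₀, by omega, ?_⟩
    have : b - n₀ + n₀ = b := by omega
    simpa [this] using hs

theorem maxInfEven_shift (s : ℕ → ℕ) (n₀ : ℕ) :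
    MaxInfEven (fun k => s (k + n₀)) ↔ MaxInfEven s := by
  unfold MaxInfEven
  constructor <;> rintro ⟨m, he, hi, hmax⟩ <;> refine ⟨m, he, ?_, fun m' h' => hmax m' ?_⟩
  · exact (setInfinite_shift s m n₀).1 hi
  · exact (setInfinite_shift s m' n₀).2 h'
  · exact (setInfinite_shift s m n₀).2 hi
  · exact (setInfinite_shift s m' n₀).1 h'

theorem wonBy_shift {V : Type} (G : GameGraph V) (p : Player) (π : ℕ → V) (n₀ : ℕ)
    (h : G.WonBy p (fun k => π (k + n₀))) : G.WonBy p π := by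
  cases p <;> unfold GameGraph.WonBy at * <;>
    [ (intro hc; exact h ((maxInfEven_shift (fun n => G.color (π n)) n₀).2 hc));
      exact (maxInfEven_shift (fun n => G.color (π n)) n₀).1 h]

/-- If all colors are ≤ c and c occurs infinitely often, the player of c's parity wins. -/
theorem wonBy_top {V : Type} (G : GameGraph V) (p : Player) (c : ℕ)
    (hp : p = if Even c then Player.two else Player.one) (π : ℕ → V)
    (hbd : ∀ n, G.color (π n) ≤ c) (hio : {k | G.color (π k) = c}.Infinite) :
    G.WonBy p π := by
  by_cases he : Even c
  · subst hp; simp only [he, if_true]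
    exact ⟨c, he, hio, fun m' h' => by
      obtain ⟨k, hk⟩ := h'.nonempty; exact hk ▸ hbd k⟩
  · subst hp; simp only [he, if_false]
    rintro ⟨m, hme, hmi, hmax⟩
    have h1 : c ≤ m := hmax c hio
    have h2 : m ≤ c := by obtain ⟨k, hk⟩ := hmi.nonempty; exact hk ▸ hbd k
    exact he (le_antisymm h2 h1 ▸ hme)


variable {V : Type} (G : GameGraph V)

/-- An infinite play staying in `S`, starting at `u`, in which player `p` follows
the memoryless strategy `f`. -/
def PlayIn (S : Set V) (p : Player) (f : V → V) (u : V) (π : ℕ → V) : Prop :=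
  π 0 = u ∧ ∀ n, π n ∈ S ∧ G.E (π n) (π (n + 1)) ∧
    (G.owner (π n) = p → π (n + 1) = f (π n))

/-- `U` is a paradise for player `p` in the subgame on `S`. -/
structure SubPar (S : Set V) (p : Player) (U : Set V) (f : V → V) : Prop where
  sub : U ⊆ S
  own : ∀ v ∈ U, G.owner v = p → G.E v (f v) ∧ f v ∈ U
  opp : ∀ v ∈ U, G.owner v ≠ p → ∀ w, G.E v w → w ∈ S → w ∈ U
  win : ∀ u ∈ U, ∀ π, PlayIn G S p f u π → G.WonBy p π

theorem PlayIn.tail {S : Set V} {p f u π} (h : PlayIn G S p f u π) (n₀ : ℕ) :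
    PlayIn G S p f (π n₀) (fun k => π (k + n₀)) := by
  refine ⟨by simp, fun n => ?_⟩
  have := h.2 (n + n₀)
  simpa [Nat.add_right_comm n n₀ 1] using this

theorem PlayIn.stay {S : Set V} {p f u π U} (hP : SubPar G S p U f)
    (h : PlayIn G S p f u π) (hu : u ∈ U) : ∀ n, π n ∈ U := by
  intro n
  induction n with
  | zero => rw [h.1]; exact hu
  | succ n ih =>
    obtain ⟨-, he, hc⟩ := h.2 n
    by_cases ho : G.owner (π n) = p
    · rw [hc ho]; exact (hP.own _ ih ho).2
    · exact hP.opp _ ih ho _ he ((h.2 (n+1)).1)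

/-- The union of all `p`-paradises in the subgame on `S` is a `p`-paradise. -/
theorem union_subPar (S : Set V) (p : Player) :
    ∃ f, SubPar G S p (⋃₀ {U | ∃ g, SubPar G S p U g}) f := by
  classical
  set W := ⋃₀ {U | ∃ g, SubPar G S p U g} with hW
  let ι := {x : Set V × (V → V) // SubPar G S p x.1 x.2}
  let r : ι → ι → Prop := WellOrderingRel
  have wf : WellFounded r := (inferInstance : IsWellOrder ι WellOrderingRel).wf
  have hIv : ∀ v ∈ W, {i : ι | v ∈ i.1.1}.Nonempty := by
    rintro v ⟨U, ⟨g, hg⟩, hvU⟩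
    exact ⟨⟨(U, g), hg⟩, hvU⟩
  let idx : ∀ v, v ∈ W → ι := fun v hv => wf.min {i : ι | v ∈ i.1.1} (hIv v hv)
  have idx_mem : ∀ v hv, v ∈ (idx v hv).1.1 := fun v hv =>
    wf.min_mem {i : ι | v ∈ i.1.1} (hIv v hv)
  have idx_min : ∀ v hv (i : ι), v ∈ i.1.1 → ¬ r i (idx v hv) := fun v hv i hi =>
    wf.not_lt_min {i : ι | v ∈ i.1.1} hi
  let f : V → V := fun v => if hv : v ∈ W then (idx v hv).1.2 v else v
  have hfW : ∀ v (hv : v ∈ W), f v = (idx v hv).1.2 v := fun v hv => dif_pos hv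
  have subW : ∀ v (hv : v ∈ W), (idx v hv).1.1 ⊆ W := fun v hv =>
    fun w hw => ⟨(idx v hv).1.1, ⟨(idx v hv).1.2, (idx v hv).2⟩, hw⟩
  refine ⟨f, ?_, ?_, ?_, ?_⟩
  · rintro v ⟨U, ⟨g, hg⟩, hvU⟩; exact hg.sub hvU
  · intro v hv ho
    rw [hfW v hv]
    obtain ⟨h1, h2⟩ := (idx v hv).2.own v (idx_mem v hv) ho
    exact ⟨h1, subW v hv h2⟩
  · intro v hv ho w he hwS
    exact subW v hv ((idx v hv).2.opp v (idx_mem v hv) ho w he hwS)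
  · -- the winning part
    intro u hu π hπ
    -- all π n ∈ W, and the index is non-increasing
    have hmem : ∀ n, π n ∈ W := by
      intro n
      induction n with
      | zero => rw [hπ.1]; exact hu
      | succ n ih =>
        obtain ⟨-, he, hc⟩ := hπ.2 n
        by_cases ho : G.owner (π n) = p
        · rw [hc ho, hfW _ ih]
          exact subW _ ih ((idx _ ih).2.own _ (idx_mem _ ih) ho).2
        · exact subW _ ih ((idx _ ih).2.opp _ (idx_mem _ ih) ho _ he ((hπ.2 (n+1)).1))
    have hstep : ∀ n, π (n+1) ∈ (idx (π n) (hmem n)).1.1 := by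
      intro n
      obtain ⟨-, he, hc⟩ := hπ.2 n
      by_cases ho : G.owner (π n) = p
      · rw [hc ho, hfW _ (hmem n)]
        exact ((idx _ (hmem n)).2.own _ (idx_mem _ (hmem n)) ho).2
      · exact (idx _ (hmem n)).2.opp _ (idx_mem _ (hmem n)) ho _ he ((hπ.2 (n+1)).1)
    have hdec : ∀ n, ¬ r (idx (π n) (hmem n)) (idx (π (n+1)) (hmem (n+1))) := by
      intro n
      exact idx_min (π (n+1)) (hmem (n+1)) _ (hstep n)
    -- the range of the index sequence has a minimal element
    set m : ℕ → ι := fun n => idx (π n) (hmem n) with hm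
    have hrange : {i : ι | ∃ n, m n = i}.Nonempty := ⟨m 0, 0, rfl⟩
    set istar := wf.min _ hrange with histar
    obtain ⟨n₀, hn₀⟩ := wf.min_mem _ hrange
    have hconst : ∀ k, m (k + n₀) = istar := by
      intro k
      induction k with
      | zero => simpa using hn₀
      | succ k ih =>
        have h1 : ¬ r (m (k + n₀)) (m (k + n₀ + 1)) := hdec (k + n₀)
        have h2 : ¬ r (m (k + n₀ + 1)) istar := wf.not_lt_min {i : ι | ∃ n, m n = i} ⟨k + n₀ + 1, rfl⟩
        rw [ih] at h1
        rcases trichotomous_of (WellOrderingRel : ι → ι → Prop)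
            (m (k + n₀ + 1)) istar with h | h | h
        · exact absurd h h2
        · simpa [Nat.add_right_comm k n₀ 1] using h
        · exact absurd h h1
    -- the tail play is consistent with istar's strategy and stays in its set
    have htail : PlayIn G S p istar.1.2 (π n₀) (fun k => π (k + n₀)) := by
      refine ⟨by simp, fun k => ?_⟩
      obtain ⟨h1, h2, h3⟩ := hπ.2 (k + n₀)
      refine ⟨h1, by simpa [Nat.add_right_comm k n₀ 1] using h2, fun ho => ?_⟩
      have := h3 ho
      rw [hfW _ (hmem (k + n₀))] at this
      have hc : idx (π (k + n₀)) (hmem (k + n₀)) = istar := hconst k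
      have harr : k + 1 + n₀ = k + n₀ + 1 := by omega
      show π (k + 1 + n₀) = _
      rw [harr, this, hc]
    have hstart : π n₀ ∈ istar.1.1 := by
      have := idx_mem (π n₀) (hmem n₀)
      have hc : idx (π n₀) (hmem n₀) = istar := by simpa using hconst 0
      rwa [hc] at this
    exact wonBy_shift G p π n₀ (istar.2.win _ hstart _ htail)

/-! ### Attractors -/

noncomputable def app (T N : Set V) (p : Player) : Ordinal.{0} → Set V := fun α =>
  {v | v ∈ T ∧ (v ∈ N ∨
    (G.owner v = p ∧ ∃ w, G.E v w ∧ w ∈ T ∧ ∃ β : Ordinal.{0}, ∃ _ : β < α, w ∈ app T N p β) ∨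
    (G.owner v ≠ p ∧ ∀ w, G.E v w → w ∈ T → ∃ β : Ordinal.{0}, ∃ _ : β < α, w ∈ app T N p β))}
termination_by α => α
decreasing_by all_goals assumption

def attr (T N : Set V) (p : Player) : Set V := {v | ∃ α : Ordinal.{0}, v ∈ app G T N p α}

noncomputable def atRank (T N : Set V) (p : Player) (v : V) : Ordinal :=
  sInf {α | v ∈ app G T N p α}

theorem attr_sub {T N : Set V} {p : Player} : attr G T N p ⊆ T := by
  rintro v ⟨α, hα⟩; rw [app] at hα; exact hα.1

theorem app_attr {T N : Set V} {p : Player} {v : V} {α : Ordinal.{0}}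
    (h : v ∈ app G T N p α) : v ∈ attr G T N p := ⟨α, h⟩

theorem atRank_le {T N : Set V} {p : Player} {v : V} {α : Ordinal.{0}}
    (h : v ∈ app G T N p α) : atRank G T N p v ≤ α := csInf_le' h

theorem atRank_mem {T N : Set V} {p : Player} {v : V} (h : v ∈ attr G T N p) :
    v ∈ app G T N p (atRank G T N p v) := by
  have : {α | v ∈ app G T N p α}.Nonempty := h
  exact csInf_mem this

theorem attr_base {T N : Set V} {p : Player} {v : V} (hT : v ∈ T) (hN : v ∈ N) :
    v ∈ attr G T N p := ⟨0, by rw [app]; exact ⟨hT, Or.inl hN⟩⟩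

theorem attr_own {T N : Set V} {p : Player} {v w : V} (hT : v ∈ T)
    (ho : G.owner v = p) (he : G.E v w) (hwT : w ∈ T) (hw : w ∈ attr G T N p) :
    v ∈ attr G T N p := by
  obtain ⟨α, hα⟩ := hw
  refine ⟨α + 1, ?_⟩
  rw [app]
  exact ⟨hT, Or.inr (Or.inl ⟨ho, w, he, hwT,
    α, (by rw [Ordinal.add_one_eq_succ]; exact Order.lt_succ α), hα⟩)⟩

theorem attr_opp {T N : Set V} {p : Player} {v : V} (hT : v ∈ T)
    (ho : G.owner v ≠ p) (hall : ∀ w, G.E v w → w ∈ T → w ∈ attr G T N p) :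
    v ∈ attr G T N p := by
  classical
  let σ := {w // G.E v w ∧ w ∈ T}
  refine ⟨iSup (fun w : σ => atRank G T N p w.1 + 1), ?_⟩
  rw [app]
  refine ⟨hT, Or.inr (Or.inr ⟨ho, fun w he hwT => ?_⟩)⟩
  refine ⟨atRank G T N p w, ?_, atRank_mem G (hall w he hwT)⟩
  refine Ordinal.lt_iSup_iff.2 ⟨⟨w, he, hwT⟩, ?_⟩
  rw [Ordinal.add_one_eq_succ]; exact Order.lt_succ _

/-- The chosen move of the attractor strategy decreases the rank. -/
theorem attr_choice {T N : Set V} {p : Player} {v : V} (h : v ∈ attr G T N p)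
    (hN : v ∉ N) (ho : G.owner v = p) :
    ∃ w, G.E v w ∧ w ∈ T ∧ ∃ β, β < atRank G T N p v ∧ w ∈ app G T N p β := by
  have hm := atRank_mem G h
  rw [app] at hm
  rcases hm.2 with h1 | ⟨-, w, he, hwT, β, hβ, hw⟩ | ⟨ho', -⟩
  · exact absurd h1 hN
  · exact ⟨w, he, hwT, β, hβ, hw⟩
  · exact absurd ho ho'

theorem attr_opp_step {T N : Set V} {p : Player} {v w : V} (h : v ∈ attr G T N p)
    (hN : v ∉ N) (ho : G.owner v ≠ p) (he : G.E v w) (hwT : w ∈ T) :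
    ∃ β, β < atRank G T N p v ∧ w ∈ app G T N p β := by
  have hm := atRank_mem G h
  rw [app] at hm
  rcases hm.2 with h1 | ⟨ho', -⟩ | ⟨-, hall⟩
  · exact absurd h1 hN
  · exact absurd ho' ho
  · obtain ⟨β, hβ, hw⟩ := hall w he hwT; exact ⟨β, hβ, hw⟩

/-- Any play consistent with an attractor strategy eventually reaches `N`. -/
theorem attr_reach {T N : Set V} {p : Player} {f : V → V}
    (hf : ∀ v, v ∈ attr G T N p → v ∉ N → G.owner v = p →
      ∃ β, β < atRank G T N p v ∧ f v ∈ app G T N p β) :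
    ∀ (α : Ordinal.{0}) (u : V), u ∈ app G T N p α → ∀ π, PlayIn G T p f u π → ∃ n, π n ∈ N := by
  intro α
  induction α using Ordinal.induction with
  | h j IH =>
    intro u hu π hπ
    by_cases hN : u ∈ N
    · exact ⟨0, by rw [hπ.1]; exact hN⟩
    have hu' : u ∈ attr G T N p := ⟨j, hu⟩
    have h0 : π 0 = u := hπ.1
    have htail : PlayIn G T p f (π 1) (fun k => π (k + 1)) := hπ.tail G 1
    by_cases ho : G.owner u = p
    · obtain ⟨β, hβ, hfv⟩ := hf u hu' hN ho
      have hβj : β < j := lt_of_lt_of_le hβ (atRank_le G hu)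
      have h1 : π 1 = f u := by
        have := (hπ.2 0).2.2; rw [h0] at this; exact this ho
      obtain ⟨n, hn⟩ := IH β hβj (f u) hfv _ (by rwa [h1] at htail)
      exact ⟨n + 1, hn⟩
    · have he : G.E u (π 1) := by have := (hπ.2 0).2.1; rwa [h0] at this
      have h1T : π 1 ∈ T := (hπ.2 1).1
      obtain ⟨β, hβ, hw⟩ := attr_opp_step G hu' hN ho he h1T
      have hβj : β < j := lt_of_lt_of_le hβ (atRank_le G hu)
      obtain ⟨n, hn⟩ := IH β hβj (π 1) hw _ htail
      exact ⟨n + 1, hn⟩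

/-! ### Gluing a set onto a paradise -/

noncomputable def glue (W : Set V) (fW g : V → V) : V → V := fun v => if v ∈ W then fW v else g v

theorem glue_subPar {S : Set V} {p : Player} {W U : Set V} {fW g : V → V}
    (hW : SubPar G S p W fW) (hU : U ⊆ S) (hdisj : ∀ v ∈ U, v ∉ W)
    (hown : ∀ v ∈ U, G.owner v = p → G.E v (g v) ∧ g v ∈ U ∪ W)
    (hopp : ∀ v ∈ U, G.owner v ≠ p → ∀ w, G.E v w → w ∈ S → w ∈ U ∪ W)
    (hwin : ∀ u ∈ U, ∀ π, PlayIn G S p (glue W fW g) u π →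
      (∀ n, π n ∈ U) → G.WonBy p π) :
    SubPar G S p (U ∪ W) (glue W fW g) := by
  classical
  have hgU : ∀ v ∈ U, glue W fW g v = g v := fun v hv => if_neg (hdisj v hv)
  have hgW : ∀ v ∈ W, glue W fW g v = fW v := fun v hv => if_pos hv
  constructor
  · rintro v (hv | hv)
    exacts [hU hv, hW.sub hv]
  · rintro v (hv | hv) ho
    · rw [hgU v hv]; exact hown v hv ho
    · rw [hgW v hv]
      obtain ⟨h1, h2⟩ := hW.own v hv ho
      exact ⟨h1, Or.inr h2⟩
  · rintro v (hv | hv) ho w he hwS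
    · exact hopp v hv ho w he hwS
    · exact Or.inr (hW.opp v hv ho w he hwS)
  · intro u hu π hπ
    have sticky : ∀ k, π k ∈ W → ∀ j, π (j + k) ∈ W := by
      intro k hk j
      induction j with
      | zero => simpa using hk
      | succ j ih =>
        obtain ⟨-, he, hc⟩ := hπ.2 (j + k)
        have harr : j + 1 + k = (j + k) + 1 := by omega
        rw [harr]
        by_cases ho : G.owner (π (j + k)) = p
        · rw [hc ho, hgW _ ih]; exact (hW.own _ ih ho).2
        · exact hW.opp _ ih ho _ he ((hπ.2 (j + k + 1)).1)
    by_cases hever : ∃ k, π k ∈ W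
    · obtain ⟨k, hk⟩ := hever
      have htail : PlayIn G S p fW (π k) (fun j => π (j + k)) := by
        refine ⟨by simp, fun j => ?_⟩
        obtain ⟨h1, h2, h3⟩ := hπ.2 (j + k)
        have harr : j + 1 + k = (j + k) + 1 := by omega
        refine ⟨h1, ?_, fun ho => ?_⟩
        · show G.E (π (j + k)) (π (j + 1 + k))
          rw [harr]; exact h2
        · show π (j + 1 + k) = fW (π (j + k))
          have ho' : G.owner (π (j + k)) = p := ho
          rw [harr, h3 ho', hgW _ (sticky k hk j)]
      exact wonBy_shift G p π k (hW.win _ hk _ htail)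
    · push_neg at hever
      have hmem : ∀ n, π n ∈ U := by
        intro n
        induction n with
        | zero =>
          rcases hu with h | h
          · rw [hπ.1]; exact h
          · exact absurd (show π 0 ∈ W by rw [hπ.1]; exact h) (hever 0)
        | succ n ih =>
          obtain ⟨-, he, hc⟩ := hπ.2 n
          by_cases ho : G.owner (π n) = p
          · have := (hown _ ih ho).2
            rw [← hgU _ ih, ← hc ho] at this
            rcases this with h | h
            exacts [h, absurd h (hever (n+1))]
          · rcases hopp _ ih ho _ he ((hπ.2 (n+1)).1) with h | h
            exacts [h, absurd h (hever (n+1))]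
      have huU : u ∈ U := by rw [← hπ.1]; exact hmem 0
      exact hwin u huU π hπ hmem

/-! ### Player lemmas -/

theorem Player.other_other (p : Player) : p.other.other = p := by cases p <;> rfl

theorem Player.eq_other_of_ne {x p : Player} (h : x ≠ p) : x = p.other := by
  cases x <;> cases p <;> simp [Player.other] at h ⊢

theorem Player.other_ne (p : Player) : p.other ≠ p := by
  cases p <;> simp [Player.other]

/-! ### The main induction -/

theorem main' (d : ℕ) : ∀ S : Set V, (∀ v ∈ S, ∃ w, G.E v w ∧ w ∈ S) →
    (∀ v ∈ S, G.color v ≤ d) → ∀ p : Player,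
    ∃ Up Uo fp fo, Up ∪ Uo = S ∧ SubPar G S p Up fp ∧ SubPar G S p.other Uo fo := by
  induction d with
  | zero =>
    intro S hS hcol p
    classical
    set f : V → V := fun v => if h : ∃ w, G.E v w ∧ w ∈ S then Classical.choose h else v
      with hf
    have hfP : ∀ v ∈ S, G.E v (f v) ∧ f v ∈ S := by
      intro v hv
      have h : ∃ w, G.E v w ∧ w ∈ S := hS v hv
      simp only [hf, dif_pos h]
      exact Classical.choose_spec h
    have htwo : SubPar G S Player.two S f := by
      refine ⟨le_refl _, fun v hv _ => hfP v hv, fun v hv _ w _ hw => hw, ?_⟩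
      intro u hu π hπ
      have hcol0 : ∀ n, G.color (π n) = 0 := fun n => Nat.le_zero.mp (hcol _ (hπ.2 n).1)
      have h2 : G.WonBy (if Even 0 then Player.two else Player.one) π :=
        wonBy_top G _ 0 rfl π (fun n => (hcol0 n).le)
          (by have he : {k | G.color (π k) = 0} = Set.univ := Set.eq_univ_of_forall hcol0
              rw [he]; exact Set.infinite_univ)
      have h3 : (if Even 0 then Player.two else Player.one) = Player.two :=
        if_pos (Even.zero)
      rwa [h3] at h2
    have hone : SubPar G S Player.one ∅ f :=
      ⟨Set.empty_subset S, by simp, by simp, by simp⟩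
    cases p
    · exact ⟨∅, S, f, f, by simp, hone, htwo⟩
    · exact ⟨S, ∅, f, f, by simp, htwo, hone⟩
  | succ d IH =>
    intro S hS hcol p₀
    classical
    set pf : Player := if Even (d+1) then Player.two else Player.one with hpf
    set qf := pf.other with hqf
    have hani : ∀ v : V, G.owner v ≠ pf → G.owner v = qf := fun v h =>
      Player.eq_other_of_ne h
    have hani' : ∀ v : V, G.owner v ≠ qf → G.owner v = pf := by
      intro v h
      have := Player.eq_other_of_ne h
      rwa [hqf, Player.other_other] at this
    have haniq : ∀ v : V, G.owner v = qf → G.owner v ≠ pf := by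
      intro v h hc
      rw [hc] at h
      exact Player.other_ne pf h.symm
    obtain ⟨fq, hWq⟩ := union_subPar G S qf
    set Wq : Set V := ⋃₀ {U | ∃ g, SubPar G S qf U g} with hWqdef
    have hWqS : Wq ⊆ S := hWq.sub
    have memWq : ∀ (U : Set V) (g : V → V), SubPar G S qf U g → U ⊆ Wq :=
      fun U g hg v hv => ⟨U, ⟨g, hg⟩, hv⟩
    set T : Set V := S \ Wq with hTdef
    have hTS : T ⊆ S := Set.diff_subset
    -- T is a trap for qf
    have trap_q : ∀ v ∈ T, G.owner v = qf → ∀ w, G.E v w → w ∈ S → w ∈ T := by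
      intro v hv ho w he hwS
      by_contra hwT
      have hwW : w ∈ Wq := by
        by_cases h : w ∈ Wq
        · exact h
        · exact absurd ⟨hwS, h⟩ hwT
      refine hv.2 (memWq _ _
        (glue_subPar G hWq (U := {v}) (g := fun _ => w) ?_ ?_ ?_ ?_ ?_) (Or.inl rfl))
      · intro x hx; rw [Set.mem_singleton_iff] at hx; rw [hx]; exact hv.1
      · intro x hx; rw [Set.mem_singleton_iff] at hx; rw [hx]; exact hv.2
      · intro x hx hox; rw [Set.mem_singleton_iff] at hx; subst hx
        exact ⟨he, Or.inr hwW⟩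
      · intro x hx hox; rw [Set.mem_singleton_iff] at hx; subst hx
        exact absurd ho hox
      · intro u hu π hπ hall
        rw [Set.mem_singleton_iff] at hu
        exfalso
        have h0 : π 0 = v := by rw [hπ.1, hu]
        have h1 : π 1 = w := by
          have := (hπ.2 0).2.2 (by rw [h0]; exact ho)
          rw [h0] at this
          rw [this]
          have hvW : v ∉ Wq := hv.2
          simp [glue, hvW]
        have := hall 1
        rw [Set.mem_singleton_iff, h1] at this
        rw [this] at hwW
        exact hv.2 hwW
    have trap_p : ∀ v ∈ T, G.owner v ≠ qf → ∃ w, G.E v w ∧ w ∈ T := by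
      intro v hv ho
      by_contra hno
      push_neg at hno
      have hallW : ∀ w, G.E v w → w ∈ S → w ∈ Wq := by
        intro w he hwS
        by_cases h : w ∈ Wq
        · exact h
        · exact absurd ⟨hwS, h⟩ (fun hT => hno w he hT)
      refine hv.2 (memWq _ _
        (glue_subPar G hWq (U := {v}) (g := fun _ => v) ?_ ?_ ?_ ?_ ?_) (Or.inl rfl))
      · intro x hx; rw [Set.mem_singleton_iff] at hx; rw [hx]; exact hv.1
      · intro x hx; rw [Set.mem_singleton_iff] at hx; rw [hx]; exact hv.2
      · intro x hx hox; rw [Set.mem_singleton_iff] at hx; subst hx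
        exact absurd hox ho
      · intro x hx hox w he hwS; rw [Set.mem_singleton_iff] at hx; subst hx
        exact Or.inr (hallW w he hwS)
      · intro u hu π hπ hall
        rw [Set.mem_singleton_iff] at hu
        exfalso
        have h0 : π 0 = v := by rw [hπ.1, hu]
        have h1W : π 1 ∈ Wq := by
          refine hallW (π 1) ?_ ((hπ.2 1).1)
          have := (hπ.2 0).2.1; rwa [h0] at this
        have := hall 1
        rw [Set.mem_singleton_iff] at this
        rw [this] at h1W
        exact hv.2 h1W
    have T_tot : ∀ v ∈ T, ∃ w, G.E v w ∧ w ∈ T := by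
      intro v hv
      by_cases ho : G.owner v = qf
      · obtain ⟨w, he, hwS⟩ := hS v (hTS hv)
        exact ⟨w, he, trap_q v hv ho w he hwS⟩
      · exact trap_p v hv ho
    -- no qf-paradise in the subgame on T is nonempty
    have emptyT : ∀ (U : Set V) (g : V → V), SubPar G T qf U g → U = ∅ := by
      intro U g hUg
      have hUT : U ⊆ T := hUg.sub
      have hsub : U ∪ Wq ⊆ Wq := by
        refine memWq _ _ (glue_subPar G hWq (U := U) (g := g) (hUT.trans hTS)
          (fun v hv => (hUT hv).2) ?_ ?_ ?_)
        · intro v hv ho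
          obtain ⟨h1, h2⟩ := hUg.own v hv ho
          exact ⟨h1, Or.inl h2⟩
        · intro v hv ho w he hwS
          by_cases hw : w ∈ T
          · exact Or.inl (hUg.opp v hv ho w he hw)
          · refine Or.inr ?_
            by_cases h : w ∈ Wq
            · exact h
            · exact absurd ⟨hwS, h⟩ hw
        · intro u hu π hπ hall
          refine hUg.win u hu π ⟨hπ.1, fun n => ?_⟩
          obtain ⟨h1, h2, h3⟩ := hπ.2 n
          refine ⟨hUT (hall n), h2, fun ho => ?_⟩
          rw [h3 ho]
          have : π n ∉ Wq := (hUT (hall n)).2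
          simp [glue, this]
      ext v
      simp only [Set.mem_empty_iff_false, iff_false]
      intro hv
      exact (hUT hv).2 (hsub (Or.inl hv))
    -- the attractor of the top color inside T
    set N : Set V := {v | v ∈ T ∧ G.color v = d + 1} with hNdef
    set A : Set V := attr G T N pf with hAdef
    have hAT : A ⊆ T := attr_sub G
    set T' : Set V := T \ A with hT'def
    have hT'T : T' ⊆ T := Set.diff_subset
    have hNA : N ⊆ A := fun v hv => attr_base G hv.1 hv
    have T'_tot : ∀ v ∈ T', ∃ w, G.E v w ∧ w ∈ T' := by
      intro v hv
      by_cases ho : G.owner v = pf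
      · have honq : G.owner v ≠ qf := fun h => haniq v h ho
        obtain ⟨w, he, hwT⟩ := trap_p v hv.1 honq
        by_cases hwA : w ∈ A
        · exact absurd (attr_own G hv.1 ho he hwT hwA) hv.2
        · exact ⟨w, he, hwT, hwA⟩
      · by_contra hno
        push_neg at hno
        refine hv.2 (attr_opp G hv.1 ho ?_)
        intro w he hwT
        by_cases hwA : w ∈ A
        · exact hwA
        · exact absurd ⟨hwT, hwA⟩ (hno w he)
    have colT' : ∀ v ∈ T', G.color v ≤ d := by
      intro v hv
      have h1 := hcol v (hTS (hT'T hv))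
      by_contra h2
      have h3 : G.color v = d + 1 := by omega
      exact hv.2 (hNA ⟨hT'T hv, h3⟩)
    obtain ⟨Pp, Po, gp, go, hcover, hPp, hPo⟩ := IH T' T'_tot colT' pf
    -- the qf-paradise from the IH is also one of the subgame on T, hence empty
    have hPoT : SubPar G T qf Po go := by
      have hPoo : SubPar G T' qf Po go := by rw [hqf]; exact hPo
      constructor
      · exact hPoo.sub.trans hT'T
      · exact hPoo.own
      · intro v hv ho w he hwT
        have hvT' : v ∈ T' := hPoo.sub hv
        have hvpf : G.owner v = pf := hani' v ho
        by_cases hwA : w ∈ A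
        · exact absurd (attr_own G hvT'.1 hvpf he hwT hwA) hvT'.2
        · exact hPoo.opp v hv ho w he ⟨hwT, hwA⟩
      · intro u hu π hπ
        have hmem : ∀ n, π n ∈ Po := by
          intro n
          induction n with
          | zero => rw [hπ.1]; exact hu
          | succ n ih =>
            obtain ⟨-, he, hc⟩ := hπ.2 n
            by_cases ho : G.owner (π n) = qf
            · rw [hc ho]; exact (hPoo.own _ ih ho).2
            · have hvT' : π n ∈ T' := hPoo.sub ih
              have hvpf : G.owner (π n) = pf := hani' _ ho
              have hwT : π (n+1) ∈ T := (hπ.2 (n+1)).1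
              by_cases hwA : π (n+1) ∈ A
              · exact absurd (attr_own G hvT'.1 hvpf he hwT hwA) hvT'.2
              · exact hPoo.opp _ ih ho _ he ⟨hwT, hwA⟩
        refine hPoo.win u hu π ⟨hπ.1, fun n => ?_⟩
        obtain ⟨h1, h2, h3⟩ := hπ.2 n
        exact ⟨hPoo.sub (hmem n), h2, h3⟩
    have hPoE : Po = ∅ := emptyT Po go hPoT
    have hPpT' : Pp = T' := by
      rw [hPoE, Set.union_empty] at hcover
      exact hcover
    -- the combined strategy for pf on T
    set tsucc : V → V := fun v =>
      if h : ∃ w, G.E v w ∧ w ∈ T then Classical.choose h else v with htsucc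
    have tsuccP : ∀ v ∈ T, G.E v (tsucc v) ∧ tsucc v ∈ T := by
      intro v hv
      have h := T_tot v hv
      simp only [htsucc, dif_pos h]
      exact Classical.choose_spec h
    set ach : V → V := fun v =>
      if h : ∃ w, G.E v w ∧ w ∈ T ∧ ∃ β, β < atRank G T N pf v ∧ w ∈ app G T N pf β then
        Classical.choose h else tsucc v with hach
    have achP : ∀ v, v ∈ A → v ∉ N → G.owner v = pf →
        G.E v (ach v) ∧ ach v ∈ T ∧
          ∃ β, β < atRank G T N pf v ∧ ach v ∈ app G T N pf β := by
      intro v hvA hvN ho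
      have h := attr_choice G hvA hvN ho
      simp only [hach, dif_pos h]
      exact Classical.choose_spec h
    set f : V → V := fun v => if v ∈ T' then gp v else if v ∈ N then tsucc v else ach v
      with hfdef
    have fT' : ∀ v ∈ T', f v = gp v := fun v hv => if_pos hv
    have fN : ∀ v ∈ N, f v = tsucc v := by
      intro v hv
      have h1 : v ∉ T' := fun h => h.2 (hNA hv)
      simp [hfdef, h1, hv]
    have fA : ∀ v, v ∈ A → v ∉ N → f v = ach v := by
      intro v hv hn
      have h1 : v ∉ T' := fun h => h.2 hv
      simp [hfdef, h1, hn]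
    have fstep : ∀ v ∈ T, G.owner v = pf → G.E v (f v) ∧ f v ∈ T := by
      intro v hv ho
      by_cases h1 : v ∈ T'
      · rw [fT' v h1]
        obtain ⟨he, hm⟩ := hPp.own v (by rw [hPpT']; exact h1) ho
        rw [hPpT'] at hm
        exact ⟨he, hT'T hm⟩
      · have hvA : v ∈ A := by
          by_contra h
          exact h1 ⟨hv, h⟩
        by_cases h2 : v ∈ N
        · rw [fN v h2]; exact tsuccP v hv
        · rw [fA v hvA h2]
          obtain ⟨he, hm, -⟩ := achP v hvA h2 ho
          exact ⟨he, hm⟩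
    have hfreach : ∀ v, v ∈ attr G T N pf → v ∉ N → G.owner v = pf →
        ∃ β, β < atRank G T N pf v ∧ f v ∈ app G T N pf β := by
      intro v hvA hvN ho
      rw [fA v hvA hvN]
      exact (achP v hvA hvN ho).2.2
    have hfinal : SubPar G S pf T f := by
      constructor
      · exact hTS
      · intro v hv ho; exact fstep v hv ho
      · intro v hv ho w he hwS
        exact trap_q v hv (hani v ho) w he hwS
      · intro u hu π hπ
        have Tmem : ∀ n, π n ∈ T := by
          intro n
          induction n with
          | zero => rw [hπ.1]; exact hu
          | succ n ih =>
            obtain ⟨-, he, hc⟩ := hπ.2 n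
            by_cases ho : G.owner (π n) = pf
            · rw [hc ho]; exact (fstep _ ih ho).2
            · exact trap_q _ ih (hani _ ho) _ he ((hπ.2 (n+1)).1)
        by_cases hio : {k | π k ∈ N}.Infinite
        · refine wonBy_top G pf (d+1) hpf π (fun n => hcol _ (hTS (Tmem n))) ?_
          refine Set.Infinite.mono ?_ hio
          intro k hk
          exact hk.2
        · have hfin : {k | π k ∈ N}.Finite := Set.not_infinite.mp hio
          obtain ⟨n₀, hn₀⟩ : ∃ n₀, ∀ n, n ≥ n₀ → π n ∉ N := by
            obtain ⟨b, hb⟩ := hfin.bddAbove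
            refine ⟨b+1, fun n hn hmem => ?_⟩
            have := hb hmem
            omega
          have hnA : ∀ n, n ≥ n₀ → π n ∉ A := by
            intro n hn hA'
            have htailT : PlayIn G T pf f (π n) (fun k => π (k + n)) := by
              refine ⟨by simp, fun k => ?_⟩
              obtain ⟨h1, h2, h3⟩ := hπ.2 (k + n)
              have harr : k + 1 + n = k + n + 1 := by omega
              refine ⟨Tmem _, ?_, fun ho => ?_⟩
              · show G.E (π (k + n)) (π (k + 1 + n))
                rw [harr]; exact h2
              · show π (k + 1 + n) = f (π (k + n))
                rw [harr]; exact h3 ho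
            obtain ⟨m, hm⟩ := attr_reach G hfreach (atRank G T N pf (π n)) (π n)
              (atRank_mem G hA') _ htailT
            exact hn₀ (m + n) (by omega) hm
          have hT'mem : ∀ n, n ≥ n₀ → π n ∈ T' := fun n hn => ⟨Tmem n, hnA n hn⟩
          have htail : PlayIn G T' pf gp (π n₀) (fun k => π (k + n₀)) := by
            refine ⟨by simp, fun k => ?_⟩
            obtain ⟨h1, h2, h3⟩ := hπ.2 (k + n₀)
            have harr : k + 1 + n₀ = k + n₀ + 1 := by omega
            refine ⟨hT'mem _ (by omega), ?_, fun ho => ?_⟩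
            · show G.E (π (k + n₀)) (π (k + 1 + n₀))
              rw [harr]; exact h2
            · show π (k + 1 + n₀) = gp (π (k + n₀))
              have ho' : G.owner (π (k + n₀)) = pf := ho
              rw [harr, h3 ho', fT' _ (hT'mem _ (by omega))]
          refine wonBy_shift G pf π n₀ ?_
          exact hPp.win _ (by rw [hPpT']; exact hT'mem n₀ le_rfl) _ htail
    have hcoverT : T ∪ Wq = S := by
      rw [hTdef]
      exact Set.diff_union_of_subset hWqS
    by_cases hp₀ : p₀ = pf
    · subst hp₀
      exact ⟨T, Wq, f, fq, hcoverT, hfinal, hWq⟩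
    · have hp₀q : p₀ = qf := Player.eq_other_of_ne hp₀
      refine ⟨Wq, T, fq, f, by rw [Set.union_comm]; exact hcoverT, ?_, ?_⟩
      · rw [hp₀q]; exact hWq
      · rw [hp₀q, hqf, Player.other_other]; exact hfinal

/-! ### Histories -/

theorem hist_zero (π : ℕ → V) : hist π 0 = [π 0] := by
  simp [hist, List.ofFn_succ]

theorem hist_succ (π : ℕ → V) (n : ℕ) : hist π (n+1) = hist π n ++ [π (n+1)] := by
  rw [hist, List.ofFn_succ']
  simp [hist, List.concat_eq_append, Fin.last]

theorem hist_getLast (π : ℕ → V) (n : ℕ) : (hist π n).getLast? = some (π n) := by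
  cases n with
  | zero => rw [hist_zero]; rfl
  | succ n => rw [hist_succ, List.getLast?_concat]

/-! ### From paradises to memoryless winning strategies -/

theorem consHist_last_mem {p : Player} {U : Set V} {f : V → V}
    (hP : SubPar G Set.univ p U f) {u : V} (hu : u ∈ U) :
    ∀ l, ConsHist G p (liftMemoryless f u) u l → ∀ v, l.getLast? = some v → v ∈ U := by
  intro l hl
  induction hl with
  | init =>
    intro v hv
    simp only [List.getLast?_singleton, Option.some.injEq] at hv
    rwa [← hv]
  | ownStep l v hl hlast ho IH =>
    intro x hx
    rw [List.getLast?_concat] at hx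
    have hvU : v ∈ U := IH v hlast
    have hσ : liftMemoryless f u l = f v := by
      unfold liftMemoryless; rw [hlast]; rfl
    have hx' : x = f v := by rw [← hσ]; exact (Option.some.injEq _ _).mp hx |>.symm
    rw [hx']
    exact (hP.own v hvU ho).2
  | oppStep l v w hl hlast ho he IH =>
    intro x hx
    rw [List.getLast?_concat] at hx
    have hx' : x = w := ((Option.some.injEq _ _).mp hx).symm
    rw [hx']
    exact hP.opp v (IH v hlast) ho w he trivial

theorem subPar_memoryless {p : Player} {U : Set V} {f : V → V}
    (hP : SubPar G Set.univ p U f) {u : V} (hu : u ∈ U) :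
    MemorylessWinningFrom G p f u := by
  constructor
  · intro l v hl hlast ho
    have hvU := consHist_last_mem G hP hu l hl v hlast
    have hσ : liftMemoryless f u l = f v := by
      unfold liftMemoryless; rw [hlast]; rfl
    rw [hσ]
    exact (hP.own v hvU ho).1
  · intro π hplay hcons
    refine hP.win u hu π ⟨hplay.1, fun n => ⟨trivial, hplay.2 n, fun ho => ?_⟩⟩
    rw [hcons n ho]
    unfold liftMemoryless
    rw [hist_getLast]
    rfl

/-! ### Playing two strategies against each other -/

open Classical in
noncomputable def duel (G : GameGraph V) (σ₁ σ₂ : List V → V) (u : V) : ℕ → List V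
  | 0 => [u]
  | n+1 =>
    let l := duel G σ₁ σ₂ u n
    l ++ [if G.owner (l.getLast?.getD u) = Player.one then σ₁ l else σ₂ l]

theorem not_both {u : V} (h1 : u ∈ WinningRegion G Player.one)
    (h2 : u ∈ WinningRegion G Player.two) : False := by
  classical
  obtain ⟨σ₁, hσ₁⟩ := h1
  obtain ⟨σ₂, hσ₂⟩ := h2
  set D : ℕ → List V := duel G σ₁ σ₂ u with hD
  set π : ℕ → V := fun n => (D n).getLast?.getD u with hπ
  have hstep : ∀ n, D (n+1) = D n ++
      [if G.owner (π n) = Player.one then σ₁ (D n) else σ₂ (D n)] := fun n => rfl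
  have hlast : ∀ n, (D n).getLast? = some (π n) := by
    intro n
    cases n with
    | zero => rfl
    | succ n =>
      rw [hstep n, List.getLast?_concat, hπ]
      simp only [hstep n, List.getLast?_concat, Option.getD_some]
      rfl
  have h0 : π 0 = u := rfl
  have hval : ∀ n, π (n+1) =
      if G.owner (π n) = Player.one then σ₁ (D n) else σ₂ (D n) := by
    intro n
    have := hlast (n+1)
    rw [hstep n, List.getLast?_concat] at this
    exact ((Option.some.injEq _ _).mp this).symm
  have hhist : ∀ n, hist π n = D n := by
    intro n
    induction n with
    | zero => rw [hist_zero, h0]; rfl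
    | succ n ih =>
      rw [hist_succ, ih, hstep n, hval n]
  have hch : ∀ n, ConsHist G Player.one σ₁ u (D n) ∧ ConsHist G Player.two σ₂ u (D n) := by
    intro n
    induction n with
    | zero => exact ⟨ConsHist.init, ConsHist.init⟩
    | succ n ih =>
      by_cases ho : G.owner (π n) = Player.one
      · have hnext : D (n+1) = D n ++ [σ₁ (D n)] := by rw [hstep n, if_pos ho]
        refine ⟨?_, ?_⟩
        · rw [hnext]; exact ConsHist.ownStep _ (π n) ih.1 (hlast n) ho
        · rw [hnext]
          refine ConsHist.oppStep _ (π n) _ ih.2 (hlast n) ?_ ?_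
          · rw [ho]; intro h; exact absurd h.symm (by simp [Player.other])
          · exact hσ₁.1 _ _ ih.1 (hlast n) ho
      · have ho2 : G.owner (π n) = Player.two := Player.eq_other_of_ne ho
        have hnext : D (n+1) = D n ++ [σ₂ (D n)] := by rw [hstep n, if_neg ho]
        refine ⟨?_, ?_⟩
        · rw [hnext]
          exact ConsHist.oppStep _ (π n) _ ih.1 (hlast n) ho
            (hσ₂.1 _ _ ih.2 (hlast n) ho2)
        · rw [hnext]; exact ConsHist.ownStep _ (π n) ih.2 (hlast n) ho2
  have hplay : IsPlayFrom G u π := by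
    refine ⟨h0, fun n => ?_⟩
    rw [hval n]
    by_cases ho : G.owner (π n) = Player.one
    · rw [if_pos ho]; exact hσ₁.1 _ _ (hch n).1 (hlast n) ho
    · rw [if_neg ho]
      exact hσ₂.1 _ _ (hch n).2 (hlast n) (Player.eq_other_of_ne ho)
  have hc1 : ConsistentPlay G Player.one σ₁ π := by
    intro n ho
    rw [hval n, if_pos ho, hhist n]
  have hc2 : ConsistentPlay G Player.two σ₂ π := by
    intro n ho
    have ho' : G.owner (π n) ≠ Player.one := by
      rw [ho]; intro h; exact absurd h (by simp [Player.other])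
    rw [hval n, if_neg ho', hhist n]
  have hw1 := hσ₁.2 π hplay hc1
  have hw2 := hσ₂.2 π hplay hc2
  exact hw1 hw2

/-! ### The main theorem -/

theorem statement0' (htot : ∀ v, ∃ w, G.E v w)
    (d : ℕ) (hcol : ∀ v, G.color v ≤ d) :
    (∀ u : V, u ∈ WinningRegion G Player.one ↔ u ∉ WinningRegion G Player.two) ∧
    (∀ p : Player, ∃ f : V → V,
      ∀ u ∈ WinningRegion G p, MemorylessWinningFrom G p f u) := by
  classical
  obtain ⟨U₁, U₂, f₁, f₂, hcover, h1, h2⟩ :=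
    main' G d Set.univ
      (fun v _ => (htot v).elim fun w hw => ⟨w, hw, trivial⟩)
      (fun v _ => hcol v) Player.one
  have h2' : SubPar G Set.univ Player.two U₂ f₂ := h2
  have hB1 : ∀ u ∈ U₁, MemorylessWinningFrom G Player.one f₁ u :=
    fun u hu => subPar_memoryless G h1 hu
  have hB2 : ∀ u ∈ U₂, MemorylessWinningFrom G Player.two f₂ u :=
    fun u hu => subPar_memoryless G h2' hu
  have hW1 : U₁ ⊆ WinningRegion G Player.one := fun u hu => ⟨_, hB1 u hu⟩
  have hW2 : U₂ ⊆ WinningRegion G Player.two := fun u hu => ⟨_, hB2 u hu⟩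
  have hmem : ∀ u : V, u ∈ U₁ ∪ U₂ := fun u => by rw [hcover]; trivial
  constructor
  · intro u
    constructor
    · intro ha hb
      exact (not_both G ha hb).elim
    · intro hb
      rcases hmem u with h | h
      · exact hW1 h
      · exact absurd (hW2 h) hb
  · intro p
    cases p
    · refine ⟨f₁, fun u hu => hB1 u ?_⟩
      rcases hmem u with h | h
      · exact h
      · exact absurd (hW2 h) (fun hb => not_both G hu hb)
    · refine ⟨f₂, fun u hu => hB2 u ?_⟩
      rcases hmem u with h | h
      · exact absurd (hW1 h) (fun ha => not_both G ha hu)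
      · exact h


/-- In a parity game (finitely many colors, no dead ends), the winning regions of the
two players partition the vertex set, and each player has a uniform memoryless winning
strategy on her winning region. -/
theorem statement0 {V : Type} (G : GameGraph V) (htot : ∀ v, ∃ w, G.E v w)
    (d : ℕ) (hcol : ∀ v, G.color v ≤ d) :
    (∀ u : V, u ∈ WinningRegion G Player.one ↔ u ∉ WinningRegion G Player.two) ∧
    (∀ p : Player, ∃ f : V → V,
      ∀ u ∈ WinningRegion G p, MemorylessWinningFrom G p f u) := by
  exact statement0' G htot d hcol
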